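/- There exists a constant C > 0, depending only on q, such that for all n ∈ ½ℤ₊ with n ≥ 1/2, all half-integers i ∈ {−n, …, n} and j ∈ {−n+1/2, …, n−1/2}, every entry of the 2×2 matrix a⁺_{nij} − (1−q^{2n+2i+2})^{1/2} · diag((1−q^{2n+2j+3})^{1/2}, (1−q^{2n+2j+1})^{1/2}) has absolute value at most C·q^{2n}. -/

import Mathlib

noncomputable section

open Real

/-- The q-number `[m] = (q^m - q^(-m))/(q - q⁻¹)`. -/
def qnum (q m : ℝ) : ℝ := (q ^ m - q ^ (-m)) / (q - q⁻¹)

/-- The 2×2 matrix `a⁺_{nij}`. -/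
def aP (q n i j : ℝ) : Matrix (Fin 2) (Fin 2) ℝ :=
  (q ^ ((i + j - 1/2) / 2) * Real.sqrt (qnum q (n + i + 1))) •
    !![q ^ (-n - 1/2) * Real.sqrt (qnum q (n + j + 3/2)) / qnum q (2*n + 2), 0;
       q ^ ((1:ℝ)/2) * Real.sqrt (qnum q (n - j + 1/2)) / (qnum q (2*n + 1) * qnum q (2*n + 2)),
       q ^ (-n) * Real.sqrt (qnum q (n + j + 1/2)) / qnum q (2*n + 1)]

/-- The 2×2 matrix `a⁻_{nij}`. -/
def aM (q n i j : ℝ) : Matrix (Fin 2) (Fin 2) ℝ :=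
  (q ^ ((i + j - 1/2) / 2) * Real.sqrt (qnum q (n - i))) •
    !![q ^ (n + 1) * Real.sqrt (qnum q (n - j + 1/2)) / qnum q (2*n + 1),
       -(q ^ ((1:ℝ)/2) * Real.sqrt (qnum q (n + j + 1/2)) / (qnum q (2*n) * qnum q (2*n + 1)));
       0, q ^ (n + 1/2) * Real.sqrt (qnum q (n - j - 1/2)) / qnum q (2*n)]

/-- The 2×2 matrix `b⁺_{nij}`. -/
def bP (q n i j : ℝ) : Matrix (Fin 2) (Fin 2) ℝ :=
  (q ^ ((i + j - 1/2) / 2) * Real.sqrt (qnum q (n + i + 1))) •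
    !![Real.sqrt (qnum q (n - j + 3/2)) / qnum q (2*n + 2), 0;
       -(q ^ (-n - 1) * Real.sqrt (qnum q (n + j + 1/2)) / (qnum q (2*n + 1) * qnum q (2*n + 2))),
       q ^ (-(1:ℝ)/2) * Real.sqrt (qnum q (n - j + 1/2)) / qnum q (2*n + 1)]

/-- The 2×2 matrix `b⁻_{nij}`. -/
def bM (q n i j : ℝ) : Matrix (Fin 2) (Fin 2) ℝ :=
  (q ^ ((i + j - 1/2) / 2) * Real.sqrt (qnum q (n - i))) •
    !![-(q ^ (-(1:ℝ)/2) * Real.sqrt (qnum q (n + j + 1/2)) / qnum q (2*n + 1)),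
       -(q ^ n * Real.sqrt (qnum q (n - j + 1/2)) / (qnum q (2*n) * qnum q (2*n + 1)));
       0, -(Real.sqrt (qnum q (n + j - 1/2)) / qnum q (2*n))]

/-- `n` is a nonnegative half-integer: `n ∈ ½ℤ₊ = {0, 1/2, 1, 3/2, …}`. -/
def HalfNat (n : ℝ) : Prop := ∃ N : ℕ, (N : ℝ) = 2 * n

/-- `i ∈ {-n, -n+1, …, n}`. -/
def IdxRange (n i : ℝ) : Prop := (∃ k : ℕ, (k : ℝ) = i + n) ∧ i ≤ n

/-- `j ∈ {-n+1/2, -n+3/2, …, n-1/2}`. -/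
def JRangeIn (n j : ℝ) : Prop := (∃ k : ℕ, (k : ℝ) = j + n - 1/2) ∧ j ≤ n - 1/2

/-- `j ∈ {-n-1/2, -n+1/2, …, n+1/2}`. -/
def JRangeOut (n j : ℝ) : Prop := (∃ k : ℕ, (k : ℝ) = j + n + 1/2) ∧ j ≤ n + 1/2

/-! For `0 < q < 1` the `q`-number is `[m] = q^(1-m) (1 - q^(2m)) / (1 - q²)`. Substituting this
into `a⁺_{nij}`, all powers of `q` cancel on the diagonal, whose entries become the claimed main
terms divided by `1 - q^(4n+4)` and `1 - q^(4n+2)`; the lower off-diagonal entry is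
`q^(3n+j+3/2)` times factors bounded by `1/(1-q²)`, and `j ≥ -n + 1/2`. Every deviation is
therefore at most `q^(2n) / (1 - q²)`. -/

theorem qnum_eq_rpow_mul {q : ℝ} (hq0 : 0 < q) (hq1 : q ≠ 1) (m : ℝ) :
    qnum q m = q ^ (1 - m) * (1 - q ^ (2 * m)) / (1 - q ^ 2) := by
  have hq2 : 1 - q ^ 2 ≠ 0 := by
    rw [show 1 - q ^ 2 = (1 - q) * (1 + q) by ring]
    exact mul_ne_zero (sub_ne_zero.2 hq1.symm) (by positivity)
  have hq2' : q ^ 2 - 1 ≠ 0 := fun h => hq2 (by linear_combination -h)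
  rw [qnum, rpow_sub hq0, rpow_one, rpow_neg hq0.le, mul_comm 2 m, rpow_mul hq0.le, rpow_two]
  field_simp
  ring

theorem sqrt_qnum {q : ℝ} (hq0 : 0 < q) (hq1 : q < 1) (m : ℝ) :
    √(qnum q m) = q ^ ((1 - m) / 2) * √(1 - q ^ (2 * m)) / √(1 - q ^ 2) := by
  rw [qnum_eq_rpow_mul hq0 hq1.ne, sqrt_div' _ (by nlinarith), sqrt_mul (rpow_nonneg hq0.le _),
    sqrt_eq_rpow, ← rpow_mul hq0.le]
  ring_nf

theorem aP_apply_zero_one (q n i j : ℝ) : aP q n i j 0 1 = 0 := by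
  simp [aP]

section Entries

variable {q : ℝ} (hq0 : 0 < q) (hq1 : q < 1) (n i j : ℝ)
include hq0 hq1

theorem aP_apply_zero_zero :
    aP q n i j 0 0 =
      √(1 - q ^ (2*n + 2*i + 2)) * √(1 - q ^ (2*n + 2*j + 3)) / (1 - q ^ (4*n + 4)) := by
  have hpow : q ^ ((i + j - 1/2) / 2) * q ^ ((1 - (n + i + 1)) / 2) * q ^ (-n - 1/2) *
      q ^ ((1 - (n + j + 3/2)) / 2) = q ^ (1 - (2*n + 2)) := by
    simp only [← rpow_add hq0]; ring_nf
  simp only [aP, Matrix.smul_apply, Matrix.of_apply, Matrix.cons_val', Matrix.cons_val_zero,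
    Matrix.empty_val', Matrix.cons_val_fin_one, smul_eq_mul]
  rw [sqrt_qnum hq0 hq1, sqrt_qnum hq0 hq1, qnum_eq_rpow_mul hq0 hq1.ne, ← hpow]
  have hc : √(1 - q ^ 2) ≠ 0 := (sqrt_pos.2 (by nlinarith)).ne'
  have hcc := mul_self_sqrt (show 0 ≤ 1 - q ^ 2 by nlinarith)
  generalize √(1 - q ^ 2) = c at hc hcc ⊢
  rw [← hcc]
  field_simp
  ring_nf

theorem aP_apply_one_zero :
    aP q n i j 1 0 =
      q ^ (3*n + j + 3/2) * (√(1 - q ^ (2*n + 2*i + 2)) * √(1 - q ^ (2*n - 2*j + 1))) *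
        (1 - q ^ 2) / ((1 - q ^ (4*n + 2)) * (1 - q ^ (4*n + 4))) := by
  have hpow : q ^ (3*n + j + 3/2) = q ^ ((i + j - 1/2) / 2) * q ^ ((1 - (n + i + 1)) / 2) *
      q ^ ((1:ℝ)/2) * q ^ ((1 - (n - j + 1/2)) / 2) / (q ^ (1 - (2*n + 1)) * q ^ (1 - (2*n + 2))) := by
    simp only [← rpow_add hq0, ← rpow_sub hq0]; ring_nf
  simp only [aP, Matrix.smul_apply, Matrix.of_apply, Matrix.cons_val', Matrix.cons_val_zero,
    Matrix.cons_val_one, Matrix.empty_val', Matrix.cons_val_fin_one, smul_eq_mul]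
  rw [sqrt_qnum hq0 hq1, sqrt_qnum hq0 hq1, qnum_eq_rpow_mul hq0 hq1.ne,
    qnum_eq_rpow_mul hq0 hq1.ne, hpow]
  have hc : √(1 - q ^ 2) ≠ 0 := (sqrt_pos.2 (by nlinarith)).ne'
  have hcc := mul_self_sqrt (show 0 ≤ 1 - q ^ 2 by nlinarith)
  generalize √(1 - q ^ 2) = c at hc hcc ⊢
  rw [← hcc]
  field_simp
  ring_nf

theorem aP_apply_one_one :
    aP q n i j 1 1 =
      √(1 - q ^ (2*n + 2*i + 2)) * √(1 - q ^ (2*n + 2*j + 1)) / (1 - q ^ (4*n + 2)) := by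
  have hpow : q ^ ((i + j - 1/2) / 2) * q ^ ((1 - (n + i + 1)) / 2) * q ^ (-n) *
      q ^ ((1 - (n + j + 1/2)) / 2) = q ^ (1 - (2*n + 1)) := by
    simp only [← rpow_add hq0]; ring_nf
  simp only [aP, Matrix.smul_apply, Matrix.of_apply, Matrix.cons_val', Matrix.cons_val_one,
    Matrix.empty_val', Matrix.cons_val_fin_one, smul_eq_mul]
  rw [sqrt_qnum hq0 hq1, sqrt_qnum hq0 hq1, qnum_eq_rpow_mul hq0 hq1.ne, ← hpow]
  have hc : √(1 - q ^ 2) ≠ 0 := (sqrt_pos.2 (by nlinarith)).ne'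
  have hcc := mul_self_sqrt (show 0 ≤ 1 - q ^ 2 by nlinarith)
  generalize √(1 - q ^ 2) = c at hc hcc ⊢
  rw [← hcc]
  field_simp
  ring_nf

end Entries

theorem abs_div_one_sub_sub_le {s x y ε : ℝ} (hs0 : 0 ≤ s) (hs1 : s ≤ 1) (hx0 : 0 ≤ x)
    (hxy : x ≤ y) (hxε : x ≤ ε) (hε : ε < 1) :
    |s / (1 - x) - s| ≤ (1 - ε)⁻¹ * y := by
  have hx1 : 0 < 1 - x := by linarith
  have hsx : s / (1 - x) - s = s * x / (1 - x) := by field_simp; ring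
  rw [hsx, abs_of_nonneg (by positivity), inv_mul_eq_div]
  exact div_le_div₀ (by linarith) (by nlinarith) (by linarith) (by linarith)

theorem abs_mul_div_one_sub_mul_one_sub_le {p s x₁ x₂ y ε : ℝ} (hp0 : 0 ≤ p) (hpy : p ≤ y)
    (hs0 : 0 ≤ s) (hs1 : s ≤ 1) (hx₁ : x₁ ≤ ε) (hx₂ : x₂ ≤ ε) (hε : ε < 1) :
    |p * s * (1 - ε) / ((1 - x₁) * (1 - x₂))| ≤ (1 - ε)⁻¹ * y := by
  have hε0 : 0 < 1 - ε := by linarith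
  have hx₁0 : 0 < 1 - x₁ := by linarith
  have hx₂0 : 0 < 1 - x₂ := by linarith
  rw [abs_of_nonneg (by positivity)]
  calc p * s * (1 - ε) / ((1 - x₁) * (1 - x₂)) ≤ y * (1 - ε) / ((1 - ε) * (1 - ε)) := by
        gcongr
        · nlinarith
        · nlinarith
    _ = (1 - ε)⁻¹ * y := by field_simp

theorem sqrt_one_sub_mul_sqrt_one_sub_le_one {x y : ℝ} (hx : 0 ≤ x) (hy : 0 ≤ y) :
    √(1 - x) * √(1 - y) ≤ 1 :=
  mul_le_one₀ (sqrt_le_one.2 (by linarith)) (sqrt_nonneg _) (sqrt_le_one.2 (by linarith))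

/-- There is `C > 0` depending only on `q` such that for all `n ∈ ½ℤ₊` with
`n ≥ 1/2`, `i ∈ {-n,…,n}`, `j ∈ {-n+1/2,…,n-1/2}`, every entry of
`a⁺_{nij} - (1-q^(2n+2i+2))^(1/2) diag((1-q^(2n+2j+3))^(1/2), (1-q^(2n+2j+1))^(1/2))`
has absolute value at most `C·q^(2n)`. -/
theorem aPlus_asymptotics (q : ℝ) (hq0 : 0 < q) (hq1 : q < 1) :
    ∃ C : ℝ, 0 < C ∧ ∀ n i j : ℝ, HalfNat n → 1/2 ≤ n → IdxRange n i → JRangeIn n j →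
      ∀ r s : Fin 2,
        |(aP q n i j - Real.sqrt (1 - q ^ (2*n + 2*i + 2)) •
            !![Real.sqrt (1 - q ^ (2*n + 2*j + 3)), 0;
               0, Real.sqrt (1 - q ^ (2*n + 2*j + 1))]) r s|
          ≤ C * q ^ (2 * n) := by
  have hε : 0 < 1 - q ^ 2 := by nlinarith
  refine ⟨(1 - q ^ 2)⁻¹, inv_pos.2 hε, ?_⟩
  rintro n i j - hn - ⟨⟨k, hk⟩, -⟩ r s
  have hj : 0 ≤ j + n - 1/2 := hk ▸ k.cast_nonneg
  have hpos (a : ℝ) : 0 ≤ q ^ a := rpow_nonneg hq0.le a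
  have hmono {a b : ℝ} (h : b ≤ a) : q ^ a ≤ q ^ b := rpow_le_rpow_of_exponent_ge hq0 hq1.le h
  have hle_sq {a : ℝ} (h : 2 ≤ a) : q ^ a ≤ q ^ 2 := (hmono h).trans_eq (rpow_two q)
  have hsqrt (a b : ℝ) := sqrt_one_sub_mul_sqrt_one_sub_le_one (hpos a) (hpos b)
  fin_cases r <;> fin_cases s <;>
    simp only [Fin.zero_eta, Fin.mk_one, Fin.isValue, Matrix.sub_apply, Matrix.smul_apply,
      Matrix.of_apply, Matrix.cons_val', Matrix.cons_val_zero, Matrix.cons_val_one,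
      Matrix.cons_val_fin_one, smul_eq_mul, mul_zero, sub_zero]
  · rw [aP_apply_zero_zero hq0 hq1]
    exact abs_div_one_sub_sub_le (by positivity) (hsqrt _ _) (hpos _) (hmono (by linarith))
      (hle_sq (by linarith)) (by linarith)
  · rw [aP_apply_zero_one, abs_zero]
    exact mul_nonneg (inv_pos.2 hε).le (hpos _)
  · rw [aP_apply_one_zero hq0 hq1]
    exact abs_mul_div_one_sub_mul_one_sub_le (hpos _) (hmono (by linarith)) (by positivity)
      (hsqrt _ _) (hle_sq (by linarith)) (hle_sq (by linarith)) (by linarith)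
  · rw [aP_apply_one_one hq0 hq1]
    exact abs_div_one_sub_sub_le (by positivity) (hsqrt _ _) (hpos _) (hmono (by linarith))
      (hle_sq (by linarith)) (by linarith)
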